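/- arXiv:1806.04457 — 2 statements merged into one kernel-verified Lean document; each statement's English description precedes it below -/
import Mathlib

section
/- Let G = (V_G, E_G) and H = (V_H, E_H) be vertex-disjoint digraphs. Then the directed path-width of the series composition G ⊗ H equals min{dpw(G) + |V_H|, dpw(H) + |V_G|}. -/
noncomputable section
attribute [local instance] Classical.propDecidable

/-- A digraph: a loopless binary relation on a vertex type. -/
structure Digraph' (V : Type) where
  Adj : V → V → Prop
  loopless : ∀ v, ¬ Adj v v

namespace Digraph'

/-- The subdigraph of `G` induced by a vertex set `S`. -/
def induce {V : Type} (G : Digraph' V) (S : Set V) : Digraph' S where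
  Adj a b := G.Adj a.1 b.1
  loopless a := G.loopless a.1

end Digraph'

/-- `bags : Fin r → Set V` is a directed path-decomposition of `G`:
(dpw-1) the bags cover `V`; (dpw-2) for every arc `(u,v)` there are `i ≤ j` with
`u ∈ X_i`, `v ∈ X_j`; (dpw-3) every vertex occurs in a consecutive interval of bags. -/
def IsDPD {V : Type} (G : Digraph' V) (r : ℕ) (bags : Fin r → Set V) : Prop :=
  (∀ v, ∃ i, v ∈ bags i) ∧
  (∀ u v, G.Adj u v → ∃ i j : Fin r, i ≤ j ∧ u ∈ bags i ∧ v ∈ bags j) ∧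
  (∀ (v : V) (i j k : Fin r), i ≤ j → j ≤ k → v ∈ bags i → v ∈ bags k → v ∈ bags j)

/-- The width of a sequence of bags: maximum bag size minus one. -/
def bagsWidth {V : Type} {r : ℕ} (bags : Fin r → Set V) : ℕ :=
  (Finset.univ.sup fun i => (bags i).ncard) - 1

/-- The directed path-width of a digraph. -/
def dpw {V : Type} [Fintype V] (G : Digraph' V) : ℕ :=
  sInf { w | ∃ (r : ℕ) (bags : Fin r → Set V), IsDPD G r bags ∧ bagsWidth bags = w }

/-- Disjoint union `G ⊕ H` of two vertex-disjoint digraphs. -/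
def dDisjUnion {V W : Type} (G : Digraph' V) (H : Digraph' W) : Digraph' (V ⊕ W) where
  Adj x y :=
    match x, y with
    | Sum.inl a, Sum.inl b => G.Adj a b
    | Sum.inr a, Sum.inr b => H.Adj a b
    | _, _ => False
  loopless v := by
    cases v with
    | inl a => exact G.loopless a
    | inr a => exact H.loopless a

/-- Order composition `G ⊘ H`: disjoint union plus all arcs from `G` to `H`. -/
def dOrder {V W : Type} (G : Digraph' V) (H : Digraph' W) : Digraph' (V ⊕ W) where
  Adj x y :=
    match x, y with
    | Sum.inl a, Sum.inl b => G.Adj a b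
    | Sum.inr a, Sum.inr b => H.Adj a b
    | Sum.inl _, Sum.inr _ => True
    | Sum.inr _, Sum.inl _ => False
  loopless v := by
    cases v with
    | inl a => exact G.loopless a
    | inr a => exact H.loopless a

/-- Series composition `G ⊗ H`: disjoint union plus all arcs in both directions
between `G` and `H`. -/
def dSeries {V W : Type} (G : Digraph' V) (H : Digraph' W) : Digraph' (V ⊕ W) where
  Adj x y :=
    match x, y with
    | Sum.inl a, Sum.inl b => G.Adj a b
    | Sum.inr a, Sum.inr b => H.Adj a b
    | Sum.inl _, Sum.inr _ => True
    | Sum.inr _, Sum.inl _ => True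
  loopless v := by
    cases v with
    | inl a => exact G.loopless a
    | inr a => exact H.loopless a

/-- A directed union `G ⊖ H`: disjoint union plus an arbitrary set `F` of arcs
directed from vertices of `G` to vertices of `H`. -/
def dDirUnion {V W : Type} (G : Digraph' V) (H : Digraph' W) (F : V → W → Prop) :
    Digraph' (V ⊕ W) where
  Adj x y :=
    match x, y with
    | Sum.inl a, Sum.inl b => G.Adj a b
    | Sum.inr a, Sum.inr b => H.Adj a b
    | Sum.inl a, Sum.inr b => F a b
    | Sum.inr _, Sum.inl _ => False
  loopless v := by
    cases v with
    | inl a => exact G.loopless a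
    | inr a => exact H.loopless a

/-- The underlying undirected graph of a digraph. -/
def und {V : Type} (G : Digraph' V) : SimpleGraph V where
  Adj u v := G.Adj u v ∨ G.Adj v u
  symm := ⟨fun u v h => h.symm⟩
  loopless := ⟨fun v h => h.elim (G.loopless v) (G.loopless v)⟩

/-- `bags` is an (undirected) path-decomposition of the simple graph `G`. -/
def IsUPD {V : Type} (G : SimpleGraph V) (r : ℕ) (bags : Fin r → Set V) : Prop :=
  (∀ v, ∃ i, v ∈ bags i) ∧
  (∀ u v, G.Adj u v → ∃ i : Fin r, u ∈ bags i ∧ v ∈ bags i) ∧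
  (∀ (v : V) (i j k : Fin r), i ≤ j → j ≤ k → v ∈ bags i → v ∈ bags k → v ∈ bags j)

/-- The (undirected) path-width of a simple graph. -/
def upw {V : Type} [Fintype V] (G : SimpleGraph V) : ℕ :=
  sInf { w | ∃ (r : ℕ) (bags : Fin r → Set V), IsUPD G r bags ∧ bagsWidth bags = w }

/-- `S` is `Z`-normal in `G`: every directed walk in `G - Z` with first and last
vertex in `S` uses only vertices of `S` (equivalently of `Z ∪ S`). -/
def ZNormal {V : Type} (G : Digraph' V) (Z S : Set V) : Prop :=
  ∀ (l : List V) (hl : l ≠ []), l.Chain' G.Adj → (∀ v ∈ l, v ∉ Z) →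
    l.head hl ∈ S → l.getLast hl ∈ S → ∀ v ∈ l, v ∈ S

/-- A directed (arboreal) tree-decomposition of `G`.
The out-tree has vertex set `Fin t`, root `root`, and parent function `par`
(with `par root = root`); its arcs are the pairs `(par s, s)` for `s ≠ root`.
`W` partitions `V` into nonempty sets, `X s` is the set attached to the arc
`(par s, s)`, and for each arc the union of the `W r` over all descendants `r`
of `s` is `X s`-normal. -/
structure DTD {V : Type} (G : Digraph' V) where
  t : ℕ
  root : Fin t
  par : Fin t → Fin t
  par_root : par root = root
  reach : ∀ s : Fin t, ∃ n : ℕ, par^[n] s = root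
  W : Fin t → Set V
  X : Fin t → Set V
  W_nonempty : ∀ s, (W s).Nonempty
  W_disjoint : ∀ s s', s ≠ s' → Disjoint (W s) (W s')
  W_cover : ∀ v : V, ∃ s, v ∈ W s
  normal : ∀ s : Fin t, s ≠ root →
    ZNormal G (X s) (⋃ r ∈ {r : Fin t | ∃ n : ℕ, par^[n] r = s}, W r)

namespace DTD

variable {V : Type} {G : Digraph' V}

/-- The set `W_s ∪ ⋃_{e ∼ s} X_e` at a tree vertex `s`. -/
def bagAt (D : DTD G) (s : Fin D.t) : Set V :=
  D.W s ∪ ⋃ s' ∈ {s' : Fin D.t | s' ≠ D.root ∧ (s' = s ∨ D.par s' = s)}, D.X s'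

/-- The width of a directed tree-decomposition. -/
def width (D : DTD G) : ℕ :=
  (Finset.univ.sup fun s => (D.bagAt s).ncard) - 1

end DTD

/-- The directed tree-width of a digraph. -/
def dtw {V : Type} [Fintype V] (G : Digraph' V) : ℕ :=
  sInf { w | ∃ D : DTD G, D.width = w }

/-- Reachability in a digraph. -/
def Reach {V : Type} (G : Digraph' V) : V → V → Prop :=
  Relation.ReflTransGen G.Adj

/-- The strongly connected component of a vertex `v`. -/
def sccOf {V : Type} (G : Digraph' V) (v : V) : Set V :=
  {u | Reach G v u ∧ Reach G u v}

/-- `S` is a strongly connected component of `G`. -/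
def IsSCC {V : Type} (G : Digraph' V) (S : Set V) : Prop :=
  ∃ v, S = sccOf G v

/-- Directed co-graphs: built from single-vertex digraphs by disjoint union,
series composition and order composition. -/
inductive DiCograph : {V : Type} → Digraph' V → Prop
  | single {V : Type} (G : Digraph' V) (h1 : Nonempty V) (h2 : Subsingleton V) :
      DiCograph G
  | disjUnion {V W : Type} {G : Digraph' V} {H : Digraph' W} :
      DiCograph G → DiCograph H → DiCograph (dDisjUnion G H)
  | series {V W : Type} {G : Digraph' V} {H : Digraph' W} :
      DiCograph G → DiCograph H → DiCograph (dSeries G H)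
  | order {V W : Type} {G : Digraph' V} {H : Digraph' W} :
      DiCograph G → DiCograph H → DiCograph (dOrder G H)


/-!
Adding all of `H` to every bag of a decomposition of `G` gives the upper bound
`dpw G + |V_H|` (and symmetrically). Conversely, in a decomposition of `G ⊗ H` every vertex of
`G` shares a bag with every vertex of `H`, since arcs run both ways; an interval argument then
yields a bag containing all of `V_G` (or all of `V_H`), and the bags containing all of `V_G`,
stripped of `V_G`, decompose `H`, so the width is at least `dpw H + |V_G|`.
-/

theorem Set.Nonempty.exists_isLeast {α : Type*} [LinearOrder α] [WellFoundedLT α] {s : Set α}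
    (hs : s.Nonempty) : ∃ a, IsLeast s a :=
  (exists_minimal_of_wellFoundedLT (· ∈ s) hs).imp fun _ => minimal_iff_isLeast.1

theorem Set.Nonempty.exists_isGreatest {α : Type*} [LinearOrder α] [WellFoundedGT α]
    {s : Set α} (hs : s.Nonempty) : ∃ a, IsGreatest s a :=
  (exists_maximal_of_wellFoundedGT (· ∈ s) hs).imp fun _ => maximal_iff_isGreatest.1

theorem Set.OrdConnected.mem_of_isLeast {α : Type*} [LinearOrder α] {s t : Set α} {a b : α}
    (hs : s.OrdConnected) (ha : a ∈ s) (hb : IsLeast t b) (hab : a ≤ b)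
    (hst : (s ∩ t).Nonempty) : b ∈ s :=
  let ⟨_, hps, hpt⟩ := hst
  hs.out ha hps ⟨hab, hb.2 hpt⟩

/-- Helly's theorem in dimension one. -/
theorem Set.OrdConnected.exists_forall_mem {ι α : Type*} [Finite ι] [Nonempty ι]
    [LinearOrder α] [WellFoundedLT α] {s : ι → Set α} (hs : ∀ i, (s i).OrdConnected)
    (hst : ∀ i j, (s i ∩ s j).Nonempty) : ∃ x, ∀ i, x ∈ s i := by
  choose m hm using fun i => ((hst i i).mono Set.inter_subset_left).exists_isLeast
  obtain ⟨k, hk⟩ := Finite.exists_max m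
  exact ⟨m k, fun i => (hs i).mem_of_isLeast (hm i).1 (hm k) (hk i) (hst i k)⟩

theorem max_min_mem_uIcc {α : Type*} [LinearOrder α] {a b p : α} (x : α) (hap : a ≤ p)
    (hpb : p ≤ b) : max a (min x b) ∈ Set.uIcc x p := by
  rcases le_total x p with h | h
  · exact Set.mem_uIcc.2 (Or.inl ⟨le_max_of_le_right (le_min le_rfl (h.trans hpb)),
      max_le hap (min_le_of_left_le h)⟩)
  · exact Set.mem_uIcc.2 (Or.inr ⟨le_max_of_le_right (le_min h hpb),
      max_le (hap.trans h) (min_le_left _ _)⟩)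

theorem Set.ncard_preimage_inl_add_ncard_preimage_inr {α β : Type*} [Finite α] [Finite β]
    (s : Set (α ⊕ β)) : (Sum.inl ⁻¹' s).ncard + (Sum.inr ⁻¹' s).ncard = s.ncard := by
  conv_rhs => rw [← Set.image_preimage_inl_union_image_preimage_inr s]
  rw [Set.ncard_union_eq Set.disjoint_image_inl_image_inr,
    Set.ncard_image_of_injective _ Sum.inl_injective,
    Set.ncard_image_of_injective _ Sum.inr_injective]

section DirectedPathDecomposition

variable {V : Type} {G : Digraph' V} {r : ℕ} {bags : Fin r → Set V}

theorem IsDPD.ordConnected (h : IsDPD G r bags) (v : V) : {i | v ∈ bags i}.OrdConnected :=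
  ⟨fun i hi k hk _ hj => h.2.2 v i _ k hj.1 hj.2 hi hk⟩

theorem IsDPD.exists_mem_mem_of_adj_of_adj (h : IsDPD G r bags) {u v : V} (huv : G.Adj u v)
    (hvu : G.Adj v u) : ∃ i, u ∈ bags i ∧ v ∈ bags i := by
  obtain ⟨i, j, hij, hu, hv⟩ := h.2.1 u v huv
  obtain ⟨i', j', hij', hv', hu'⟩ := h.2.1 v u hvu
  rcases le_total j j' with hjj' | hj'j
  · exact ⟨j, h.2.2 u i j j' hij hjj' hu hu', hv⟩
  · exact ⟨j', hu', h.2.2 v i' j' j hij' hj'j hv' hv⟩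

theorem IsDPD.comap {B : Type} {G' : Digraph' B} {bags : Fin r → Set B} (h : IsDPD G' r bags)
    (f : V → B) (hf : ∀ u v, G.Adj u v → G'.Adj (f u) (f v)) :
    IsDPD G r (fun i => f ⁻¹' bags i) :=
  ⟨fun v => h.1 (f v), fun u v huv => h.2.1 _ _ (hf u v huv), fun v => h.2.2 (f v)⟩

theorem IsDPD.comp_of_monotone (h : IsDPD G r bags) {φ : Fin r → Fin r} (hφ : Monotone φ)
    (hmem : ∀ v i, v ∈ bags i → v ∈ bags (φ i)) : IsDPD G r (fun i => bags (φ i)) := by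
  refine ⟨fun v => (h.1 v).imp (hmem v), fun u v huv => ?_,
    fun v i j k hij hjk => h.2.2 v _ _ _ (hφ hij) (hφ hjk)⟩
  obtain ⟨i, j, hij, hu, hv⟩ := h.2.1 u v huv
  exact ⟨i, j, hij, hmem u i hu, hmem v j hv⟩

theorem isDPD_univ (G : Digraph' V) : IsDPD G 1 (fun _ => Set.univ) :=
  ⟨fun _ => ⟨0, trivial⟩, fun _ _ _ => ⟨0, 0, le_rfl, trivial, trivial⟩,
    fun _ _ _ _ _ _ _ _ => trivial⟩

theorem bagsWidth_le_add_of_ncard_le {A B : Type} {X : Fin r → Set A} {Y : Fin r → Set B}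
    {c : ℕ} (h : ∀ i, (Y i).ncard ≤ (X i).ncard + c) : bagsWidth Y ≤ bagsWidth X + c := by
  have : (Finset.univ.sup fun i => (Y i).ncard) ≤ (Finset.univ.sup fun i => (X i).ncard) + c :=
    Finset.sup_le fun i _ => (h i).trans <| Nat.add_le_add_right
      (Finset.le_sup (f := fun i => (X i).ncard) (Finset.mem_univ i)) c
  unfold bagsWidth
  omega

theorem add_le_bagsWidth_of_forall_exists {A B : Type} [Finite A] {s : ℕ} {Z : Fin s → Set A}
    {Y : Fin r → Set B} {c : ℕ} (hZ : ∃ i, (Z i).Nonempty)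
    (h : ∀ i, ∃ j, (Z i).ncard + c ≤ (Y j).ncard) : bagsWidth Z + c ≤ bagsWidth Y := by
  unfold bagsWidth
  set supY := Finset.univ.sup fun j => (Y j).ncard
  have hle : ∀ i, (Z i).ncard + c ≤ supY := fun i =>
    let ⟨j, hj⟩ := h i
    hj.trans (Finset.le_sup (f := fun j => (Y j).ncard) (Finset.mem_univ j))
  have hsup : (Finset.univ.sup fun i => (Z i).ncard) ≤ supY - c :=
    Finset.sup_le fun i _ => by have := hle i; omega
  obtain ⟨i, hi⟩ := hZ
  have hpos : 0 < (Z i).ncard := (Set.ncard_pos (Set.toFinite _)).2 hi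
  have := hle i
  omega

variable [Fintype V]

theorem dpw_le (h : IsDPD G r bags) : dpw G ≤ bagsWidth bags :=
  Nat.sInf_le ⟨r, bags, h, rfl⟩

theorem exists_isDPD_bagsWidth_eq_dpw (G : Digraph' V) :
    ∃ (r : ℕ) (bags : Fin r → Set V), IsDPD G r bags ∧ bagsWidth bags = dpw G :=
  Nat.sInf_mem
    (s := {w | ∃ (r : ℕ) (bags : Fin r → Set V), IsDPD G r bags ∧ bagsWidth bags = w})
    ⟨_, 1, fun _ => Set.univ, isDPD_univ G, rfl⟩

theorem dpw_le_card_sub_one (G : Digraph' V) : dpw G ≤ Fintype.card V - 1 := by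
  simpa [bagsWidth, Set.ncard_univ] using dpw_le (isDPD_univ G)

theorem dpw_eq_zero_of_isEmpty [IsEmpty V] (G : Digraph' V) : dpw G = 0 := by
  simpa using dpw_le_card_sub_one G

theorem dpw_le_dpw_of_injective {B : Type} [Fintype B] {G' : Digraph' B} {f : V → B}
    (hf : f.Injective) (hadj : ∀ u v, G.Adj u v → G'.Adj (f u) (f v)) : dpw G ≤ dpw G' := by
  obtain ⟨r, bags, h, hw⟩ := exists_isDPD_bagsWidth_eq_dpw G'
  calc dpw G ≤ bagsWidth (fun i => f ⁻¹' bags i) := dpw_le (h.comap f hadj)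
    _ ≤ bagsWidth bags + 0 := bagsWidth_le_add_of_ncard_le fun i =>
      Set.ncard_le_ncard_of_injOn f (fun _ h => h) hf.injOn (Set.toFinite _)
    _ = dpw G' := hw

end DirectedPathDecomposition

section Series

variable {V W : Type} {G : Digraph' V} {H : Digraph' W} {r : ℕ}

theorem dSeries_adj_swap {x y : V ⊕ W} (h : (dSeries G H).Adj x y) :
    (dSeries H G).Adj x.swap y.swap := by
  rcases x with a | b <;> rcases y with a' | b' <;> exact h

theorem IsDPD.dSeries_union_range_inr {X : Fin r → Set V} (hX : IsDPD G r X) (hr : 0 < r) :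
    IsDPD (dSeries G H) r (fun i => Sum.inl '' X i ∪ Set.range Sum.inr) := by
  obtain ⟨hcov, harc, hint⟩ := hX
  refine ⟨?_, ?_, ?_⟩
  · rintro (a | b)
    · obtain ⟨i, hi⟩ := hcov a
      exact ⟨i, by simpa using hi⟩
    · exact ⟨⟨0, hr⟩, by simp⟩
  · rintro (a | b) (a' | b') h
    · obtain ⟨i, j, hij, ha, ha'⟩ := harc a a' h
      exact ⟨i, j, hij, by simpa using ha, by simpa using ha'⟩
    · obtain ⟨i, hi⟩ := hcov a
      exact ⟨i, i, le_rfl, by simpa using hi, by simp⟩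
    · obtain ⟨i, hi⟩ := hcov a'
      exact ⟨i, i, le_rfl, by simp, by simpa using hi⟩
    · exact ⟨⟨0, hr⟩, ⟨0, hr⟩, le_rfl, by simp, by simp⟩
  · rintro (a | b) i j k hij hjk hi hk
    · simp only [Set.mem_union, Set.mem_image, Sum.inl.injEq, exists_eq_right, Set.mem_range,
        reduceCtorEq, exists_false, or_false] at hi hk ⊢
      exact hint a i j k hij hjk hi hk
    · simp

variable [Fintype V] [Fintype W]

theorem dpw_dSeries_le (G : Digraph' V) (H : Digraph' W) :
    dpw (dSeries G H) ≤ dpw G + Fintype.card W := by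
  obtain ⟨r, X, hX, hw⟩ := exists_isDPD_bagsWidth_eq_dpw G
  rcases Nat.eq_zero_or_pos r with rfl | hr
  · have : IsEmpty V := ⟨fun v => (hX.1 v).elim fun i _ => i.elim0⟩
    calc dpw (dSeries G H) ≤ Fintype.card (V ⊕ W) - 1 := dpw_le_card_sub_one _
      _ ≤ dpw G + Fintype.card W := by rw [Fintype.card_sum, Fintype.card_eq_zero]; omega
  · calc dpw (dSeries G H) ≤ bagsWidth (fun i => Sum.inl '' X i ∪ Set.range Sum.inr) :=
          dpw_le (hX.dSeries_union_range_inr hr)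
      _ ≤ bagsWidth X + Fintype.card W := bagsWidth_le_add_of_ncard_le fun i =>
          (Set.ncard_union_le _ _).trans <| by
            rw [Set.ncard_image_of_injective _ Sum.inl_injective,
              Set.ncard_range_of_injective Sum.inr_injective, Nat.card_eq_fintype_card]
      _ = dpw G + Fintype.card W := by rw [hw]

/-- The vertex whose first bag comes last sees all vertices of the other side in that bag. -/
theorem IsDPD.dSeries_exists_bag_forall_mem [Nonempty (V ⊕ W)] {Y : Fin r → Set (V ⊕ W)}
    (hY : IsDPD (dSeries G H) r Y) :
    (Nonempty W ∧ ∃ i, ∀ a, Sum.inl a ∈ Y i) ∨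
      (Nonempty V ∧ ∃ i, ∀ b, Sum.inr b ∈ Y i) := by
  choose first hfirst using fun x => Set.Nonempty.exists_isLeast (s := {i | x ∈ Y i}) (hY.1 x)
  obtain ⟨k, hk⟩ := Finite.exists_max first
  have hmem : ∀ x, (dSeries G H).Adj x k → (dSeries G H).Adj k x → x ∈ Y (first k) :=
    fun x hxk hkx => (hY.ordConnected x).mem_of_isLeast (hfirst x).1 (hfirst k) (hk x)
      (hY.exists_mem_mem_of_adj_of_adj hxk hkx)
  rcases k with a | b
  · exact Or.inr ⟨⟨a⟩, _, fun b => hmem (Sum.inr b) trivial trivial⟩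
  · exact Or.inl ⟨⟨b⟩, _, fun a => hmem (Sum.inl a) trivial trivial⟩

/-- The bags containing all of `V` form an interval `J`; clamping every bag index into `J` and
keeping only the vertices of `H` yields a decomposition of `H` whose bags have `|V|` fewer
vertices than those of `Y`. -/
theorem IsDPD.dpw_add_card_le_of_forall_inl_mem [Nonempty W] {Y : Fin r → Set (V ⊕ W)}
    (hY : IsDPD (dSeries G H) r Y) (hV : ∃ i, ∀ a, Sum.inl a ∈ Y i) :
    dpw H + Fintype.card V ≤ bagsWidth Y := by
  set J : Set (Fin r) := {i | ∀ a, Sum.inl a ∈ Y i}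
  have hJ : J.OrdConnected :=
    ⟨fun i hi k hk j hj a => (hY.ordConnected _).out (hi a) (hk a) hj⟩
  obtain ⟨jm, hjm⟩ := Set.Nonempty.exists_isLeast (s := J) hV
  obtain ⟨jM, hjM⟩ := Set.Nonempty.exists_isGreatest (s := J) hV
  have hmeet : ∀ b, ∃ p ∈ J, Sum.inr b ∈ Y p := by
    intro b
    obtain ⟨p, hp⟩ := Set.OrdConnected.exists_forall_mem
      (s := fun o : Option V => {i | o.elim (Sum.inr b) Sum.inl ∈ Y i})
      (fun o => hY.ordConnected _) <| by
        rintro (_ | a) (_ | a')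
        · exact (hY.1 _).imp fun _ hi => ⟨hi, hi⟩
        · exact hY.exists_mem_mem_of_adj_of_adj (u := Sum.inr b) (v := Sum.inl a') trivial trivial
        · exact hY.exists_mem_mem_of_adj_of_adj (u := Sum.inl a) (v := Sum.inr b) trivial trivial
        · obtain ⟨i, hi⟩ := hV
          exact ⟨i, hi a, hi a'⟩
    exact ⟨p, fun a => hp (some a), hp none⟩
  set φ : Fin r → Fin r := fun i => max jm (min i jM)
  have hφ : Monotone φ := fun i j hij => max_le_max le_rfl (min_le_min hij le_rfl)
  have hφJ : ∀ i, φ i ∈ J := fun i =>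
    hJ.out hjm.1 hjM.1 ⟨le_max_left _ _, max_le (hjm.2 hjM.1) (min_le_right _ _)⟩
  have hφmem : ∀ x i, x ∈ Y i → x ∈ Y (φ i) := by
    rintro (a | b) i hi
    · exact hφJ i a
    · obtain ⟨p, hpJ, hp⟩ := hmeet b
      exact (hY.ordConnected _).uIcc_subset hi hp (max_min_mem_uIcc i (hjm.2 hpJ) (hjM.2 hpJ))
  have hZ : IsDPD H r (fun i => Sum.inr ⁻¹' Y (φ i)) :=
    (hY.comp_of_monotone hφ hφmem).comap Sum.inr fun _ _ h => h
  have hcard : ∀ i, (Sum.inr ⁻¹' Y (φ i)).ncard + Fintype.card V = (Y (φ i)).ncard := by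
    intro i
    have hinl : Sum.inl ⁻¹' Y (φ i) = Set.univ := Set.eq_univ_of_forall (hφJ i)
    rw [← Set.ncard_preimage_inl_add_ncard_preimage_inr, hinl, Set.ncard_univ,
      Nat.card_eq_fintype_card, add_comm]
  obtain ⟨b⟩ := ‹Nonempty W›
  calc dpw H + Fintype.card V ≤ bagsWidth (fun i => Sum.inr ⁻¹' Y (φ i)) + Fintype.card V :=
        Nat.add_le_add_right (dpw_le hZ) _
    _ ≤ bagsWidth Y := add_le_bagsWidth_of_forall_exists ((hZ.1 b).imp fun _ h => ⟨b, h⟩)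
        fun i => ⟨φ i, (hcard i).le⟩

theorem IsDPD.dpw_add_card_le_of_forall_inr_mem [Nonempty V] {Y : Fin r → Set (V ⊕ W)}
    (hY : IsDPD (dSeries G H) r Y) (hW : ∃ i, ∀ b, Sum.inr b ∈ Y i) :
    dpw G + Fintype.card W ≤ bagsWidth Y :=
  calc dpw G + Fintype.card W ≤ bagsWidth (fun i => Sum.swap ⁻¹' Y i) :=
        (hY.comap Sum.swap fun _ _ => dSeries_adj_swap).dpw_add_card_le_of_forall_inl_mem hW
    _ ≤ bagsWidth Y + 0 := bagsWidth_le_add_of_ncard_le fun _ =>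
        Set.ncard_le_ncard_of_injOn _ (fun _ h => h) Sum.swap_leftInverse.injective.injOn
          (Set.toFinite _)
    _ = bagsWidth Y := rfl

end Series

theorem stmt6 {V W : Type} [Fintype V] [Fintype W] (G : Digraph' V) (H : Digraph' W) :
    dpw (dSeries G H) = min (dpw G + Fintype.card W) (dpw H + Fintype.card V) := by
  refine le_antisymm (le_min (dpw_dSeries_le G H) ?_) ?_
  · calc dpw (dSeries G H) ≤ dpw (dSeries H G) :=
          dpw_le_dpw_of_injective Sum.swap_leftInverse.injective fun _ _ => dSeries_adj_swap
      _ ≤ dpw H + Fintype.card V := dpw_dSeries_le H G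
  obtain ⟨r, Y, hY, hw⟩ := exists_isDPD_bagsWidth_eq_dpw (dSeries G H)
  rw [← hw]
  rcases isEmpty_or_nonempty (V ⊕ W) with hVW | hVW
  · have : IsEmpty V := ⟨fun a => hVW.false (Sum.inl a)⟩
    have : IsEmpty W := ⟨fun b => hVW.false (Sum.inr b)⟩
    simp [dpw_eq_zero_of_isEmpty]
  rcases hY.dSeries_exists_bag_forall_mem with ⟨hW, hV⟩ | ⟨hV, hW⟩
  · exact (min_le_right _ _).trans (hY.dpw_add_card_le_of_forall_inl_mem hV)
  · exact (min_le_left _ _).trans (hY.dpw_add_card_le_of_forall_inr_mem hW)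
end
end

section
/- Let G and H be two directed co-graphs. Then the (undirected) path-width of the underlying undirected graph of the order composition G ⊘ H is strictly greater than the directed path-width of G ⊘ H. -/
noncomputable section
attribute [local instance] Classical.propDecidable

/-!
Take an optimal path-decomposition `(B i)` of the join `un (G ⊘ H)`. Since every arc between the
two sides goes from `G` to `H`, listing the `G`-parts of all bags and then their `H`-parts is a
directed path-decomposition of `G ⊘ H`. Each part is one vertex short of the maximum bag size:
a vertex `x` on the other side is adjacent to the whole part, and clamping `i` into the interval
of bags containing `x` yields a bag containing both the part and `x`.
-/

lemma DiCograph.nonempty {V : Type} {G : Digraph' V} (h : DiCograph G) : Nonempty V := by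
  induction h with
  | single _ hV _ => exact hV
  | disjUnion _ _ ih _ | series _ _ ih _ | order _ _ ih _ => exact ⟨.inl ih.some⟩

lemma Fin.castAdd_lt_natAdd {m n : ℕ} (i : Fin m) (j : Fin n) :
    Fin.castAdd n i < Fin.natAdd m j :=
  Nat.lt_of_lt_of_le i.2 (Nat.le_add_right m j)

lemma bagsWidth_le {V : Type} {r c : ℕ} {B : Fin r → Set V} (hB : ∀ i, (B i).ncard ≤ c) :
    bagsWidth B ≤ c - 1 :=
  Nat.sub_le_sub_right (Finset.sup_le fun i _ => hB i) 1

lemma dpw_le_bagsWidth {V : Type} [Fintype V] {D : Digraph' V} {r : ℕ} {B : Fin r → Set V}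
    (hB : IsDPD D r B) : dpw D ≤ bagsWidth B :=
  Nat.sInf_le ⟨r, B, hB, rfl⟩

lemma exists_isUPD_bagsWidth_eq_upw {V : Type} [Fintype V] (G : SimpleGraph V) :
    ∃ (r : ℕ) (B : Fin r → Set V), IsUPD G r B ∧ bagsWidth B = upw G :=
  Nat.sInf_mem (s := {w | ∃ (r : ℕ) (B : Fin r → Set V), IsUPD G r B ∧ bagsWidth B = w})
    ⟨_, 1, fun _ => Set.univ,
      ⟨fun _ => ⟨0, trivial⟩, fun _ _ _ => ⟨0, trivial, trivial⟩, fun _ _ _ _ _ _ _ _ => trivial⟩,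
      rfl⟩

namespace IsUPD

variable {V : Type} {G : SimpleGraph V} {r : ℕ} {B : Fin r → Set V}

lemma isDPD {D : Digraph' V} (hB : IsUPD (und D) r B) : IsDPD D r B :=
  ⟨hB.1, fun u v huv => let ⟨i, hu, hv⟩ := hB.2.1 u v (Or.inl huv); ⟨i, i, le_rfl, hu, hv⟩,
    hB.2.2⟩

lemma mem_of_min_le_of_le_max (hB : IsUPD G r B) {x : V} {i j k : Fin r} (hi : x ∈ B i)
    (hk : x ∈ B k) (hij : min i k ≤ j) (hjk : j ≤ max i k) : x ∈ B j := by
  rcases le_total i k with h | h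
  · exact hB.2.2 x i j k (by simpa [h] using hij) (by simpa [h] using hjk) hi hk
  · exact hB.2.2 x k j i (by simpa [h] using hij) (by simpa [h] using hjk) hk hi

/-- Clamping `i` to the interval of bags containing `x` gives a bag that still contains every
vertex of `B i` met by that interval, in particular every neighbour of `x`. -/
lemma exists_insert_subset (hB : IsUPD G r B) {S : Set V} {i : Fin r} (hS : S ⊆ B i) {x : V}
    (hx : ∀ y ∈ S, G.Adj x y) : ∃ j, insert x S ⊆ B j := by
  let I := Finset.univ.filter (x ∈ B ·)
  have hI : I.Nonempty := let ⟨a, ha⟩ := hB.1 x; ⟨a, by simpa [I] using ha⟩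
  have ha : x ∈ B (I.min' hI) := by simpa [I] using I.min'_mem hI
  have hb : x ∈ B (I.max' hI) := by simpa [I] using I.max'_mem hI
  have hab := I.min'_le_max' hI
  refine ⟨max (I.min' hI) (min i (I.max' hI)), ?_⟩
  rintro y (rfl | hy)
  · exact hB.mem_of_min_le_of_le_max ha hb (by order) (by order)
  · obtain ⟨k, hxk, hyk⟩ := hB.2.1 x y (hx y hy)
    have hak : I.min' hI ≤ k := I.min'_le k (by simpa [I] using hxk)
    have hkb : k ≤ I.max' hI := I.le_max' k (by simpa [I] using hxk)
    exact hB.mem_of_min_le_of_le_max (hS hy) hyk (by order) (by order)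

lemma ncard_lt_sup [Finite V] (hB : IsUPD G r B) {S : Set V} {i : Fin r} (hS : S ⊆ B i)
    {x : V} (hx : ∀ y ∈ S, G.Adj x y) : S.ncard < Finset.univ.sup fun j => (B j).ncard := by
  obtain ⟨j, hj⟩ := hB.exists_insert_subset hS hx
  have hxS : x ∉ S := fun h => G.loopless.irrefl x (hx x h)
  calc S.ncard < (insert x S).ncard := Set.ncard_lt_ncard (Set.ssubset_insert hxS)
    _ ≤ (B j).ncard := Set.ncard_le_ncard hj
    _ ≤ _ := Finset.le_sup (f := fun j => (B j).ncard) (Finset.mem_univ j)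

end IsUPD

section SideBags

variable {V W : Type} {r : ℕ} {B : Fin r → Set (V ⊕ W)}

def sideBags (B : Fin r → Set (V ⊕ W)) : Fin (r + r) → Set (V ⊕ W) :=
  Fin.append (fun i => B i ∩ Set.range Sum.inl) (fun i => B i ∩ Set.range Sum.inr)

lemma mem_sideBags_castAdd {x : V ⊕ W} {i : Fin r} :
    x ∈ sideBags B (Fin.castAdd r i) ↔ x ∈ B i ∧ x.isLeft := by
  simp only [sideBags, Fin.append_left]
  cases x <;> simp

lemma mem_sideBags_natAdd {x : V ⊕ W} {i : Fin r} :
    x ∈ sideBags B (Fin.natAdd r i) ↔ x ∈ B i ∧ x.isRight := by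
  simp only [sideBags, Fin.append_right]
  cases x <;> simp

lemma IsDPD.sideBags {D : Digraph' (V ⊕ W)} (hB : IsDPD D r B)
    (hD : ∀ a b, ¬ D.Adj (.inr b) (.inl a)) : IsDPD D (r + r) (sideBags B) := by
  refine ⟨fun x => ?_, fun u v huv => ?_, fun x i j k hij hjk hi hk => ?_⟩
  · obtain ⟨i, hi⟩ := hB.1 x
    cases x
    · exact ⟨Fin.castAdd r i, mem_sideBags_castAdd.2 ⟨hi, rfl⟩⟩
    · exact ⟨Fin.natAdd r i, mem_sideBags_natAdd.2 ⟨hi, rfl⟩⟩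
  · obtain ⟨i, j, hij, hu, hv⟩ := hB.2.1 u v huv
    cases u <;> cases v
    · exact ⟨Fin.castAdd r i, Fin.castAdd r j, hij, mem_sideBags_castAdd.2 ⟨hu, rfl⟩,
        mem_sideBags_castAdd.2 ⟨hv, rfl⟩⟩
    · exact ⟨Fin.castAdd r i, Fin.natAdd r j, (Fin.castAdd_lt_natAdd i j).le,
        mem_sideBags_castAdd.2 ⟨hu, rfl⟩, mem_sideBags_natAdd.2 ⟨hv, rfl⟩⟩
    · exact (hD _ _ huv).elim
    · exact ⟨Fin.natAdd r i, Fin.natAdd r j, (Fin.natAdd_le_natAdd_iff r).2 hij,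
        mem_sideBags_natAdd.2 ⟨hu, rfl⟩, mem_sideBags_natAdd.2 ⟨hv, rfl⟩⟩
  · cases x with
    | inl a =>
      induction i using Fin.addCases with
      | right i => exact absurd (mem_sideBags_natAdd.1 hi).2 Bool.false_ne_true
      | left i =>
      induction k using Fin.addCases with
      | right k => exact absurd (mem_sideBags_natAdd.1 hk).2 Bool.false_ne_true
      | left k =>
      induction j using Fin.addCases with
      | right j => exact absurd hjk (Fin.castAdd_lt_natAdd k j).not_ge
      | left j =>
        rw [mem_sideBags_castAdd] at hi hk ⊢
        exact ⟨hB.2.2 _ i j k hij hjk hi.1 hk.1, hi.2⟩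
    | inr b =>
      induction i using Fin.addCases with
      | left i => exact absurd (mem_sideBags_castAdd.1 hi).2 Bool.false_ne_true
      | right i =>
      induction k using Fin.addCases with
      | left k => exact absurd (mem_sideBags_castAdd.1 hk).2 Bool.false_ne_true
      | right k =>
      induction j using Fin.addCases with
      | left j => exact absurd hij (Fin.castAdd_lt_natAdd j i).not_ge
      | right j =>
        rw [mem_sideBags_natAdd] at hi hk ⊢
        exact ⟨hB.2.2 _ i j k ((Fin.natAdd_le_natAdd_iff r).1 hij)
          ((Fin.natAdd_le_natAdd_iff r).1 hjk) hi.1 hk.1, hi.2⟩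

lemma bagsWidth_sideBags_le {c : ℕ} (hL : ∀ i, (B i ∩ Set.range Sum.inl).ncard ≤ c)
    (hR : ∀ i, (B i ∩ Set.range Sum.inr).ncard ≤ c) : bagsWidth (sideBags B) ≤ c - 1 :=
  bagsWidth_le <| Fin.addCases (by simpa only [sideBags, Fin.append_left] using hL)
    (by simpa only [sideBags, Fin.append_right] using hR)

end SideBags

theorem dpw_dOrder_lt_upw {V W : Type} [Fintype V] [Fintype W] [Nonempty V] [Nonempty W]
    (G : Digraph' V) (H : Digraph' W) : dpw (dOrder G H) < upw (und (dOrder G H)) := by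
  obtain ⟨r, B, hB, hwidth⟩ := exists_isUPD_bagsWidth_eq_upw (und (dOrder G H))
  set M := Finset.univ.sup fun i => (B i).ncard
  have hL (i : Fin r) : (B i ∩ Set.range Sum.inl).ncard ≤ M - 1 :=
    Nat.le_sub_one_of_lt <| hB.ncard_lt_sup (x := .inr (Classical.arbitrary W))
      Set.inter_subset_left (by rintro _ ⟨-, a, rfl⟩; exact Or.inr trivial)
  have hR (i : Fin r) : (B i ∩ Set.range Sum.inr).ncard ≤ M - 1 :=
    Nat.le_sub_one_of_lt <| hB.ncard_lt_sup (x := .inl (Classical.arbitrary V))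
      Set.inter_subset_left (by rintro _ ⟨-, b, rfl⟩; exact Or.inl trivial)
  have hM : 1 < M := by
    obtain ⟨i, hi⟩ := hB.1 (.inl (Classical.arbitrary V))
    simpa only [Set.ncard_singleton] using hB.ncard_lt_sup (Set.singleton_subset_iff.2 hi)
      (x := .inr (Classical.arbitrary W)) (by rintro _ rfl; exact Or.inr trivial)
  calc dpw (dOrder G H) ≤ bagsWidth (sideBags B) :=
        dpw_le_bagsWidth (hB.isDPD.sideBags fun _ _ h => h)
    _ ≤ M - 1 - 1 := bagsWidth_sideBags_le hL hR
    _ < M - 1 := by omega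
    _ = upw (und (dOrder G H)) := hwidth

theorem stmt17 {V W : Type} [Fintype V] [Fintype W] (G : Digraph' V) (H : Digraph' W)
    (hG : DiCograph G) (hH : DiCograph H) :
    dpw (dOrder G H) < upw (und (dOrder G H)) :=
  have := hG.nonempty
  have := hH.nonempty
  dpw_dOrder_lt_upw G H
end
end
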